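/- arXiv:1203.2904 — 2 statements merged into one kernel-verified Lean document; each statement's English description precedes it below -/
import Mathlib

section
/- Let F₁·e(Q₁) and F₂·e(Q₂) be two fundamental solution matrices of the same linear differential system ∂_z Y = A·Y, with F_i ∈ GL_m(K̂_F) and e(Q_i) diagonal matrices of exponentials e(q) with q in the exponential module E. If the field of ∂_z-constants of the total field is M and K̂_F ∩ M((e(q))_{q∈E}) = M, then F₁⁻¹F₂ ∈ GL_m(M). -/
private lemma det_mem_subfield {Ω : Type*} [Field Ω] {m : ℕ} (KF : Subfield Ω)
    (X : Matrix (Fin m) (Fin m) Ω) (h : ∀ i j, X i j ∈ KF) : X.det ∈ KF := by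
  rw [Matrix.det_apply]
  exact Subfield.sum_mem _ fun σ _ => Subfield.zsmul_mem _
    (Subfield.prod_mem _ fun i _ => h _ _) _

private lemma inv_mem_subfield {Ω : Type*} [Field Ω] {m : ℕ} (KF : Subfield Ω)
    (X : Matrix (Fin m) (Fin m) Ω) (h : ∀ i j, X i j ∈ KF) :
    ∀ i j, X⁻¹ i j ∈ KF := by
  intro i j
  rw [Matrix.inv_def]
  simp only [Matrix.smul_apply, smul_eq_mul, Ring.inverse_eq_inv']
  refine KF.mul_mem (KF.inv_mem (det_mem_subfield KF X h)) ?_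
  rw [Matrix.adjugate_apply]
  refine det_mem_subfield KF _ fun a b => ?_
  rw [Matrix.updateRow_apply]
  split
  · rcases eq_or_ne b i with rfl | hb
    · simpa [Pi.single_apply] using KF.one_mem
    · simpa [Pi.single_apply, hb] using KF.zero_mem
  · exact h a b


/-- Lemma A.3. Let `(Ω, δ)` be a differential field whose field of
`δ`-constants is `M`, let `K̂_F` be an intermediate differential subfield with
`M ≤ K̂_F`, and let `e(q)`, `q ∈ E` (a ℚ-vector space), be exponentials:
`e(0) = 1`, `e(q+q') = e(q)e(q')`, `δ e(q) = v(q)·e(q)`. Assume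
`K̂_F ∩ M((e(q))_{q∈E}) = M`. If `F₁·e(Q₁)` and `F₂·e(Q₂)` are two fundamental
solutions of `∂_z Y = A·Y` with `Fᵢ ∈ GL_m(K̂_F)` and `e(Qᵢ)` diagonal matrices
of exponentials, then `F₁⁻¹F₂ ∈ GL_m(M)`, i.e. all entries of `F₁⁻¹F₂` lie
in `M`. -/
theorem stmt_14 {Ω : Type*} [Field Ω] [CharZero Ω] (m : ℕ)
    (δ : Ω → Ω) (hδadd : ∀ x y, δ (x + y) = δ x + δ y)
    (hδmul : ∀ x y, δ (x * y) = δ x * y + x * δ y)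
    (M KF : Subfield Ω) (hMKF : M ≤ KF)
    (hconst : ∀ x : Ω, δ x = 0 ↔ x ∈ M)
    (hKFδ : ∀ x ∈ KF, δ x ∈ KF)
    {E : Type*} [AddCommGroup E] [Module ℚ E]
    (e : E → Ω) (he0 : e 0 = 1) (headd : ∀ q q', e (q + q') = e q * e q')
    (hene : ∀ q, e q ≠ 0)
    (v : E →+ Ω) (hδe : ∀ q, δ (e q) = v q * e q)
    (hcap : (KF : Set Ω) ∩
      (Subfield.closure ((M : Set Ω) ∪ Set.range e) : Set Ω) ⊆ (M : Set Ω))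
    (A : Matrix (Fin m) (Fin m) Ω) (hA : ∀ i j, A i j ∈ KF)
    (Q₁ Q₂ : Fin m → E)
    (F₁ F₂ : Matrix (Fin m) (Fin m) Ω)
    (hF₁mem : ∀ i j, F₁ i j ∈ KF) (hF₂mem : ∀ i j, F₂ i j ∈ KF)
    (hF₁ : IsUnit F₁.det) (hF₂ : IsUnit F₂.det)
    (hsol₁ : ∀ i j, δ ((F₁ * Matrix.diagonal (fun i => e (Q₁ i))) i j) =
      (A * (F₁ * Matrix.diagonal (fun i => e (Q₁ i)))) i j)
    (hsol₂ : ∀ i j, δ ((F₂ * Matrix.diagonal (fun i => e (Q₂ i))) i j) =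
      (A * (F₂ * Matrix.diagonal (fun i => e (Q₂ i)))) i j) :
    ∀ i j, (F₁⁻¹ * F₂) i j ∈ M := by
  set D₁ := Matrix.diagonal (fun i => e (Q₁ i)) with hD₁def
  set D₂ := Matrix.diagonal (fun i => e (Q₂ i)) with hD₂def
  set G₁ := F₁ * D₁ with hG₁def
  set G₂ := F₂ * D₂ with hG₂def
  have δh : Ω →+ Ω := AddMonoidHom.mk' δ hδadd
  have hδsum : ∀ (s : Finset (Fin m)) (f : Fin m → Ω),
      δ (∑ k ∈ s, f k) = ∑ k ∈ s, δ (f k) :=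
    fun s f => map_sum (AddMonoidHom.mk' δ hδadd) f s
  -- Leibniz rule for entrywise matrix derivative
  have hmulmap : ∀ X Y : Matrix (Fin m) (Fin m) Ω,
      (X * Y).map δ = X.map δ * Y + X * Y.map δ := by
    intro X Y
    ext a b
    simp only [Matrix.map_apply, Matrix.mul_apply, Matrix.add_apply]
    rw [hδsum, ← Finset.sum_add_distrib]
    exact Finset.sum_congr rfl fun k _ => hδmul _ _
  have hD₁unit : IsUnit D₁.det := by
    rw [hD₁def, Matrix.det_diagonal]
    exact isUnit_iff_ne_zero.2 (Finset.prod_ne_zero_iff.2 fun k _ => hene _)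
  have hD₂unit : IsUnit D₂.det := by
    rw [hD₂def, Matrix.det_diagonal]
    exact isUnit_iff_ne_zero.2 (Finset.prod_ne_zero_iff.2 fun k _ => hene _)
  have hG₁unit : IsUnit G₁.det := by rw [hG₁def, Matrix.det_mul]; exact hF₁.mul hD₁unit
  have hG₁d : G₁.map δ = A * G₁ := by ext a b; exact hsol₁ a b
  have hG₂d : G₂.map δ = A * G₂ := by ext a b; exact hsol₂ a b
  set C := G₁⁻¹ * G₂ with hCdef
  have hGC : G₁ * C = G₂ := Matrix.mul_nonsing_inv_cancel_left G₁ G₂ hG₁unit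
  have hCd : C.map δ = 0 := by
    have h1 : G₁.map δ * C + G₁ * C.map δ = A * G₁ * C := by
      rw [← hmulmap, hGC, hG₂d, mul_assoc, hGC]
    rw [hG₁d] at h1
    have h2 : G₁ * C.map δ = 0 := add_eq_left.mp h1
    calc C.map δ = G₁⁻¹ * (G₁ * C.map δ) :=
          (Matrix.nonsing_inv_mul_cancel_left G₁ _ hG₁unit).symm
      _ = 0 := by rw [h2, mul_zero]
  have hCmem : ∀ a b, C a b ∈ M := by
    intro a b
    refine (hconst _).mp ?_
    have := congrFun (congrFun hCd a) b
    simpa [Matrix.map_apply] using this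
  set B := F₁⁻¹ * F₂ with hBdef
  -- B * D₂ = D₁ * C
  have hBD : B * D₂ = D₁ * C := by
    rw [hCdef, hG₁def, Matrix.mul_inv_rev]
    calc B * D₂ = F₁⁻¹ * (F₂ * D₂) := by rw [hBdef, mul_assoc]
      _ = D₁ * (D₁⁻¹ * (F₁⁻¹ * G₂)) := by
          rw [Matrix.mul_nonsing_inv_cancel_left _ _ hD₁unit, hG₂def]
      _ = D₁ * (D₁⁻¹ * F₁⁻¹ * G₂) := by rw [mul_assoc]
  intro i j
  have hentry : B i j * e (Q₂ j) = e (Q₁ i) * C i j := by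
    have := congrFun (congrFun hBD i) j
    rwa [hBdef, Matrix.mul_diagonal, Matrix.diagonal_mul] at this
  have hBval : B i j = e (Q₁ i) * C i j * (e (Q₂ j))⁻¹ := by
    rw [← hentry, mul_assoc, mul_inv_cancel₀ (hene (Q₂ j)), mul_one]
  -- membership in KF
  have hBKF : B i j ∈ KF := by
    rw [hBdef, Matrix.mul_apply]
    exact Subfield.sum_mem _ fun k _ =>
      KF.mul_mem (inv_mem_subfield KF F₁ hF₁mem i k) (hF₂mem k j)
  -- membership in the closure
  have hBS : B i j ∈ Subfield.closure ((M : Set Ω) ∪ Set.range e) := by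
    rw [hBval]
    refine Subfield.mul_mem _ (Subfield.mul_mem _ ?_ ?_) (Subfield.inv_mem _ ?_)
    · exact Subfield.subset_closure (Or.inr ⟨Q₁ i, rfl⟩)
    · exact Subfield.subset_closure (Or.inl (hCmem i j))
    · exact Subfield.subset_closure (Or.inr ⟨Q₂ j, rfl⟩)
  exact hcap ⟨hBKF, hBS⟩
end

section
/- Any element of SL₂(k) (k a field of characteristic 0) together with the two unipotent matrices [[1,0],[u,1]] and [[1,v],[0,1]] with u, v ≠ 0 generates a subgroup whose Zariski closure is not contained in any Borel subgroup, any conjugate of the infinite dihedral group D_∞ (normalizer of the diagonal torus), or any finite subgroup of SL₂. Formal version: if G is a Zariski-closed subgroup of SL₂(k̄) (k̄ algebraically closed, characteristic 0) containing [[1,0],[u,1]] and [[1,v],[0,1]] with u·v ≠ 0, then G is not conjugate to a subgroup of upper triangular matrices, nor to a subgroup of the normalizer of the diagonal torus, nor finite — hence G = SL₂(k̄) by the classification of algebraic subgroups of SL₂. -/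
/-! The powers `U₂ ^ m = [[1, m v], [0, 1]]` are infinitely many points (characteristic 0) of
the line `t ↦ [[1, t], [0, 1]]` lying in `G`. Restricted to that line, each polynomial defining
`G` becomes a one-variable polynomial with infinitely many roots, hence zero, so the whole root
subgroup lies in `G`; likewise for the lower one through `U₁`. The two root subgroups generate
`SL₂`, so `G = SL₂`, which is infinite, and for any `g` it contains elements `x` such that
`g x g⁻¹` is a non-diagonal unipotent of either triangularity, so it is conjugate neither into
the Borel subgroup nor into the normalizer of the torus. -/

open Matrix Polynomial

theorem MvPolynomial.eval_polynomial_curve_eq_zero_of_infinite {k σ : Type*} [Field k]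
    (p : MvPolynomial σ k) (f : σ → k[X])
    (h : {t | MvPolynomial.eval (fun i => (f i).eval t) p = 0}.Infinite) (t : k) :
    MvPolynomial.eval (fun i => (f i).eval t) p = 0 := by
  have eval_aeval : ∀ s, (MvPolynomial.aeval f p).eval s =
      MvPolynomial.eval (fun i => (f i).eval s) p := fun s => by
    simpa [Polynomial.coe_aeval_eq_eval, MvPolynomial.coe_aeval_eq_eval] using
      MvPolynomial.comp_aeval_apply f (Polynomial.aeval s) p
  have hzero : MvPolynomial.aeval f p = 0 :=
    Polynomial.eq_zero_of_infinite_isRoot _ <| h.mono fun s hs => by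
      simpa [Polynomial.IsRoot, eval_aeval] using hs
  rw [← eval_aeval, hzero, Polynomial.eval_zero]

theorem Submonoid.infinite_setOf_mem_of_map_natCast_mul {k H : Type*} [Field k] [CharZero k]
    [Monoid H] (S : Submonoid H) {φ : k → H} (hφ : ∀ (m : ℕ) t, φ (m * t) = φ t ^ m) {v : k}
    (hv : v ≠ 0) (h : φ v ∈ S) : {t | φ t ∈ S}.Infinite := by
  refine (Set.infinite_range_of_injective (f := fun m : ℕ => (m : k) * v)
    fun a b hab => ?_).mono ?_
  · exact_mod_cast mul_right_cancel₀ hv hab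
  · rintro _ ⟨m, rfl⟩
    simpa [hφ] using S.pow_mem h m

namespace Matrix.SpecialLinearGroup

variable {n k : Type*} [Fintype n] [DecidableEq n] [Field k]

def IsZariskiClosed (S : Set (SpecialLinearGroup n k)) : Prop :=
  ∃ I : Set (MvPolynomial (n × n) k), S = {x : SpecialLinearGroup n k |
    ∀ p ∈ I, MvPolynomial.eval (fun ij => (x : Matrix n n k) ij.1 ij.2) p = 0}

theorem IsZariskiClosed.mem_of_infinite {S : Set (SpecialLinearGroup n k)}
    (hS : IsZariskiClosed S) (A : k → SpecialLinearGroup n k) (M : Matrix n n k[X])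
    (hA : ∀ t, (A t : Matrix n n k) = M.map (eval t)) (hinf : {t | A t ∈ S}.Infinite) (t : k) :
    A t ∈ S := by
  obtain ⟨I, rfl⟩ := hS
  intro p hp
  simpa [hA] using MvPolynomial.eval_polynomial_curve_eq_zero_of_infinite p
    (fun ij => M ij.1 ij.2) (hinf.mono fun s hs => by simpa [hA] using hs p hp) t

theorem exists_conj_eq {g : Matrix n n k} (hg : IsUnit g.det) (z : SpecialLinearGroup n k) :
    ∃ x : SpecialLinearGroup n k, g * (x : Matrix n n k) * g⁻¹ = z := by
  refine ⟨⟨g⁻¹ * z * g, by simp [Matrix.det_nonsing_inv, hg.ne_zero]⟩, ?_⟩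
  simp [Matrix.mul_assoc, Matrix.mul_nonsing_inv _ hg, Matrix.mul_nonsing_inv_cancel_left _ _ hg]

theorem transvection_injective {i j : n} (hij : i ≠ j) :
    Function.Injective (transvection (F := k) hij) :=
  fun _ _ h => by simpa [transvection_coe, hij] using congr_arg (fun A => A i j) h

theorem transvection_natCast_mul {i j : n} (hij : i ≠ j) (m : ℕ) (b : k) :
    transvection hij (m * b) = transvection hij b ^ m := by
  induction m with
  | zero => simp [transvection_coeff_zero]
  | succ m ih => rw [pow_succ, ← ih, ← transvection_add]; push_cast; ring_nf

theorem IsZariskiClosed.transvection_mem [CharZero k] {G : Subgroup (SpecialLinearGroup n k)}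
    (hG : IsZariskiClosed (G : Set (SpecialLinearGroup n k))) {i j : n} (hij : i ≠ j) {b : k}
    (hb : b ≠ 0) (h : transvection hij b ∈ G) (c : k) : transvection hij c ∈ G :=
  hG.mem_of_infinite (transvection hij) (1 + single i j X)
    (fun t => by
      ext r s
      simp only [transvection_coe, map_apply, add_apply, one_apply, single_apply]
      split_ifs <;> simp)
    (G.toSubmonoid.infinite_setOf_mem_of_map_natCast_mul (transvection_natCast_mul hij) hb h) c

theorem SL2.eq_top_of_transvection_mem {G : Subgroup (SpecialLinearGroup (Fin 2) k)}
    (h₀₁ : ∀ c, transvection zero_ne_one c ∈ G) (h₁₀ : ∀ c, transvection one_ne_zero c ∈ G) :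
    G = ⊤ := by
  refine (Subgroup.eq_top_iff' G).2 (SL2.transvection_induction _ (fun i j hij c => ?_)
    (fun _ _ => mul_mem))
  fin_cases i <;> fin_cases j
  exacts [absurd rfl hij, h₀₁ c, h₁₀ c, absurd rfl hij]

end Matrix.SpecialLinearGroup

open Matrix.SpecialLinearGroup in
theorem stmt_18_general {k : Type*} [Field k] [CharZero k]
    (G : Subgroup (Matrix.SpecialLinearGroup (Fin 2) k))
    (hGclosed : ∃ I : Set (MvPolynomial (Fin 2 × Fin 2) k),
      (G : Set (Matrix.SpecialLinearGroup (Fin 2) k)) =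
        {x : Matrix.SpecialLinearGroup (Fin 2) k | ∀ p ∈ I, MvPolynomial.eval
          (fun ij => (x : Matrix (Fin 2) (Fin 2) k) ij.1 ij.2) p = 0})
    (u v : k) (hu : u ≠ 0) (hv : v ≠ 0)
    (U₁ U₂ : Matrix.SpecialLinearGroup (Fin 2) k)
    (hU₁ : (U₁ : Matrix (Fin 2) (Fin 2) k) = !![1, 0; u, 1])
    (hU₂ : (U₂ : Matrix (Fin 2) (Fin 2) k) = !![1, v; 0, 1])
    (hU₁G : U₁ ∈ G) (hU₂G : U₂ ∈ G) :
    (¬ ∃ g : Matrix (Fin 2) (Fin 2) k, IsUnit g.det ∧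
        ∀ x ∈ G, (g * (x : Matrix (Fin 2) (Fin 2) k) * g⁻¹) 1 0 = 0) ∧
    (¬ ∃ g : Matrix (Fin 2) (Fin 2) k, IsUnit g.det ∧
        ∀ x ∈ G, ((g * (x : Matrix (Fin 2) (Fin 2) k) * g⁻¹) 0 1 = 0 ∧
                  (g * (x : Matrix (Fin 2) (Fin 2) k) * g⁻¹) 1 0 = 0) ∨
                 ((g * (x : Matrix (Fin 2) (Fin 2) k) * g⁻¹) 0 0 = 0 ∧
                  (g * (x : Matrix (Fin 2) (Fin 2) k) * g⁻¹) 1 1 = 0)) ∧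
    (¬ (G : Set (Matrix.SpecialLinearGroup (Fin 2) k)).Finite) ∧
    G = ⊤ := by
  have hU₁ : U₁ = transvection one_ne_zero u := by
    ext i j; fin_cases i <;> fin_cases j <;> simp [hU₁, transvection_coe]
  have hU₂ : U₂ = transvection zero_ne_one v := by
    ext i j; fin_cases i <;> fin_cases j <;> simp [hU₂, transvection_coe]
  have hG : IsZariskiClosed (G : Set (SpecialLinearGroup (Fin 2) k)) := hGclosed
  obtain rfl : G = ⊤ := SL2.eq_top_of_transvection_mem
    (hG.transvection_mem _ hv (hU₂ ▸ hU₂G)) (hG.transvection_mem _ hu (hU₁ ▸ hU₁G))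
  refine ⟨fun ⟨g, hg, hB⟩ => ?_, fun ⟨g, hg, hD⟩ => ?_, ?_, rfl⟩
  · obtain ⟨x, hx⟩ := exists_conj_eq hg (transvection one_ne_zero 1)
    simpa [hx, transvection_coe] using hB x (Subgroup.mem_top x)
  · obtain ⟨x, hx⟩ := exists_conj_eq hg (transvection zero_ne_one 1)
    simpa [hx, transvection_coe] using hD x (Subgroup.mem_top x)
  · have := Infinite.of_injective _ (transvection_injective (zero_ne_one' (Fin 2)) (k := k))
    simpa using Set.infinite_univ (α := Matrix.SpecialLinearGroup (Fin 2) k)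

/-- Let `k` be an algebraically closed field of characteristic 0 and `G` a
Zariski-closed subgroup of `SL₂(k)` (its underlying set is the zero locus of a
set of polynomials in the matrix entries) containing the unipotent matrices
`[[1,0],[u,1]]` and `[[1,v],[0,1]]` with `u·v ≠ 0`. Then `G` is not conjugate
to a subgroup of the upper triangular matrices, nor to a subgroup of the
normalizer of the diagonal torus, nor finite — hence, by the classification of
algebraic subgroups of `SL₂`, `G = SL₂(k)`. -/
theorem stmt_18 {k : Type*} [Field k] [IsAlgClosed k] [CharZero k]
    (G : Subgroup (Matrix.SpecialLinearGroup (Fin 2) k))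
    (hGclosed : ∃ I : Set (MvPolynomial (Fin 2 × Fin 2) k),
      (G : Set (Matrix.SpecialLinearGroup (Fin 2) k)) =
        {x : Matrix.SpecialLinearGroup (Fin 2) k | ∀ p ∈ I, MvPolynomial.eval
          (fun ij => (x : Matrix (Fin 2) (Fin 2) k) ij.1 ij.2) p = 0})
    (u v : k) (hu : u ≠ 0) (hv : v ≠ 0)
    (U₁ U₂ : Matrix.SpecialLinearGroup (Fin 2) k)
    (hU₁ : (U₁ : Matrix (Fin 2) (Fin 2) k) = !![1, 0; u, 1])
    (hU₂ : (U₂ : Matrix (Fin 2) (Fin 2) k) = !![1, v; 0, 1])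
    (hU₁G : U₁ ∈ G) (hU₂G : U₂ ∈ G) :
    (¬ ∃ g : Matrix (Fin 2) (Fin 2) k, IsUnit g.det ∧
        ∀ x ∈ G, (g * (x : Matrix (Fin 2) (Fin 2) k) * g⁻¹) 1 0 = 0) ∧
    (¬ ∃ g : Matrix (Fin 2) (Fin 2) k, IsUnit g.det ∧
        ∀ x ∈ G, ((g * (x : Matrix (Fin 2) (Fin 2) k) * g⁻¹) 0 1 = 0 ∧
                  (g * (x : Matrix (Fin 2) (Fin 2) k) * g⁻¹) 1 0 = 0) ∨
                 ((g * (x : Matrix (Fin 2) (Fin 2) k) * g⁻¹) 0 0 = 0 ∧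
                  (g * (x : Matrix (Fin 2) (Fin 2) k) * g⁻¹) 1 1 = 0)) ∧
    (¬ (G : Set (Matrix.SpecialLinearGroup (Fin 2) k)).Finite) ∧
    G = ⊤ :=
  stmt_18_general G hGclosed u v hu hv U₁ U₂ hU₁ hU₂ hU₁G hU₂G
end
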